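/- arXiv:1111.6187 — 5 statements merged into one kernel-verified Lean document; each statement's English description precedes it below -/
import Mathlib

section
/- Let w₁ = r₁e^γ with r₁ ≠ 0 and γ = β + λH + ν where (ν,H) = 0. Then Σ_{(β,ω)}(v,w₁)/(H,ω) = −(r₁/2)((ω²) + λ²(H²) − (ν²))·d_γ(v) − r₁λ(a_γ(v) + (D_γ(v),ν)) for every v in the Mukai lattice, where (ω²) = (ω,ω), (H²) = (H,H), (ν²) = (ν,ν). -/
variable {N : Type*} [AddCommGroup N] [Module ℚ N]

/-- The Mukai pairing on the rational Mukai lattice `Λ_ℚ = ℚ × N × ℚ`,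
`⟨x,y⟩ = (x₁,y₁) − x₀y₂ − x₂y₀`. -/
def mpair (B : N →ₗ[ℚ] N →ₗ[ℚ] ℚ) (x y : ℚ × N × ℚ) : ℚ :=
  B x.2.1 y.2.1 - x.1 * y.2.2 - x.2.2 * y.1

/-- `e^β = (1, β, (β,β)/2)`. -/
def mexp (B : N →ₗ[ℚ] N →ₗ[ℚ] ℚ) (β : N) : ℚ × N × ℚ :=
  (1, β, B β β / 2)

/-- The fundamental class `ϱ`. -/
def mrho : ℚ × N × ℚ := (0, 0, 1)

/-- `r_β(v) = −⟨v,ϱ⟩`. -/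
def rInv (B : N →ₗ[ℚ] N →ₗ[ℚ] ℚ) (v : ℚ × N × ℚ) : ℚ :=
  -(mpair B v mrho)

/-- `a_β(v) = −⟨v, e^β⟩`. -/
def aInv (B : N →ₗ[ℚ] N →ₗ[ℚ] ℚ) (β : N) (v : ℚ × N × ℚ) : ℚ :=
  -(mpair B v (mexp B β))

/-- `d_β(v) = ⟨v, H + (H,β)ϱ⟩ / (H,H)`. -/
def dInv (B : N →ₗ[ℚ] N →ₗ[ℚ] ℚ) (H β : N) (v : ℚ × N × ℚ) : ℚ :=
  mpair B v (0, H, B H β) / B H H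

/-- `D_β(v)`, the `H`-orthogonal part of the `NS`-component of `v`. -/
def DInv (B : N →ₗ[ℚ] N →ₗ[ℚ] ℚ) (H β : N) (v : ℚ × N × ℚ) : N :=
  v.2.1 - rInv B v • β - dInv B H β v • H

/-- The stability function `Z_{(β,ω)}(v) = ⟨e^{β+iω}, v⟩` with `ω = t•H`,
expanded as `⟨e^β,v⟩ + i⟨ω + (ω,β)ϱ, v⟩ − ((ω,ω)/2)⟨ϱ,v⟩`. -/
noncomputable def Zst (B : N →ₗ[ℚ] N →ₗ[ℚ] ℚ) (H β : N) (t : ℚ)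
    (v : ℚ × N × ℚ) : ℂ :=
  ((mpair B (mexp B β) v : ℚ) : ℂ)
    + ((mpair B (0, t • H, B (t • H) β) v : ℚ) : ℂ) * Complex.I
    - ((B (t • H) (t • H) / 2 : ℚ) : ℂ) * ((mpair B mrho v : ℚ) : ℂ)

/-- `Σ_{(β,ω)}(v,w) = Re Z(v)·Im Z(w) − Im Z(v)·Re Z(w)`. -/
noncomputable def Sigma2 (B : N →ₗ[ℚ] N →ₗ[ℚ] ℚ) (H β : N) (t : ℚ)
    (v w : ℚ × N × ℚ) : ℝ :=
  (Zst B H β t v).re * (Zst B H β t w).im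
    - (Zst B H β t v).im * (Zst B H β t w).re

/-- For `w₁ = r₁e^γ`, `γ = β + λH + ν` with `(ν,H)=0`:
`Σ_{(β,ω)}(v,w₁)/(H,ω)
  = −(r₁/2)((ω²)+λ²(H²)−(ν²))d_γ(v) − r₁λ(a_γ(v) + (D_γ(v),ν))`. -/
theorem sigma_w1_formula (B : N →ₗ[ℚ] N →ₗ[ℚ] ℚ)
    (hB : ∀ a b : N, B a b = B b a) (H : N) (hH : 0 < B H H)
    (β ν : N) (hν : B ν H = 0) (t : ℚ) (ht : 0 < t)
    (lam r₁ : ℚ) (hr₁ : r₁ ≠ 0)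
    (γ : N) (hγ : γ = β + lam • H + ν) (v : ℚ × N × ℚ) :
    Sigma2 B H β t v (r₁ • mexp B γ) / ((B H (t • H) : ℚ) : ℝ)
      = ((-(r₁ / 2) * (B (t • H) (t • H) + lam ^ 2 * B H H - B ν ν)
              * dInv B H γ v
            - r₁ * lam * (aInv B γ v + B (DInv B H γ v) ν) : ℚ) : ℝ) := by
  have hZre : ∀ u : ℚ × N × ℚ, (Zst B H β t u).re
      = ((mpair B (mexp B β) u - (B (t • H) (t • H) / 2) * mpair B mrho u : ℚ) : ℝ) := by
    intro u; simp [Zst]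
  have hZim : ∀ u : ℚ × N × ℚ, (Zst B H β t u).im
      = ((mpair B (0, t • H, B (t • H) β) u : ℚ) : ℝ) := by
    intro u; simp [Zst]
  set w := r₁ • mexp B γ with hw
  have key : Sigma2 B H β t v w
      = (((mpair B (mexp B β) v - (B (t • H) (t • H) / 2) * mpair B mrho v)
            * mpair B (0, t • H, B (t • H) β) w
          - mpair B (0, t • H, B (t • H) β) v
            * (mpair B (mexp B β) w - (B (t • H) (t • H) / 2) * mpair B mrho w) : ℚ) : ℝ) := by
    rw [Sigma2, hZre, hZim, hZre, hZim]; push_cast; ring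
  rw [key, show (((B H (t • H) : ℚ)) : ℝ) = ((B H (t • H) : ℚ) : ℝ) from rfl,
    ← Rat.cast_div, Rat.cast_inj]
  have hc : B H (t • H) ≠ 0 := by
    simp only [map_smul, smul_eq_mul]
    positivity
  subst hγ
  rw [div_eq_iff hc]
  simp only [hw, mpair, mexp, mrho, dInv, aInv, DInv, rInv, map_add, map_smul,
    LinearMap.add_apply, LinearMap.smul_apply, smul_eq_mul, Prod.smul_fst,
    Prod.smul_snd, Prod.fst, Prod.snd, map_sub, LinearMap.sub_apply, map_zero,
    LinearMap.zero_apply, mul_zero, zero_mul, sub_zero, mul_one, one_mul]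
  have h1 := hB β ν
  have h2 := hB β H
  have h3 := hB v.2.1 β
  have h4 := hB v.2.1 H
  have h5 := hB v.2.1 ν
  have h6 := hB H ν
  field_simp

  simp only [h1, h2, h3, h4, h5, h6, hν]
  ring
end

section
/- With γ − β = λH + ν ((ν,H)=0) and L as above, Σ_{(β,ω)}(v, r₁e^γ)/(H,ω) = −r₁(c₁(v) − (rk v)γ, L) − r₁λa_γ(v), where rk v = r_γ(v) is the rank component and c₁(v) ∈ NS_ℚ is the degree-2 component of v, so that c₁(v) − (rk v)γ = d_γ(v)H + D_γ(v). -/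
variable {N : Type*} [AddCommGroup N] [Module ℚ N]

/-- `L = ((ω²) + λ²(H²) − (ν²))/(2(H²))·H + λν`. -/
def Ldiv (B : N →ₗ[ℚ] N →ₗ[ℚ] ℚ) (H ν : N) (t lam : ℚ) : N :=
  ((B (t • H) (t • H) + lam ^ 2 * B H H - B ν ν) / (2 * B H H)) • H + lam • ν

/-!
Twisting by `e^γ` writes `v = r e^γ + (0, c, (c,γ)) + a ϱ` with `r = r_γ(v)`, `c = c₁(v) − rγ` and
`a = a_γ(v)`. Since `Σ` is antisymmetric, the `r e^γ` part does not pair with `r₁ e^γ`, so only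
`Z(0, c, (c,γ)) = −(c, γ − β) + i(ω, c)` and `Z(ϱ) = −1` remain, against
`Z(e^γ) = ((ω²) − (γ − β)²)/2 + i(ω, γ − β)`. With `γ − β = λH + ν` and `ν ⊥ H` one has
`(ω, γ − β) = λ(H, ω)` and `(γ − β)² = λ²(H²) + (ν²)`, and dividing by `(H, ω)` collects the
terms into `−r₁(c, L) − r₁λa`.
-/

section StabilityFunction

variable (B : N →ₗ[ℚ] N →ₗ[ℚ] ℚ) (H β : N) (t : ℚ)

lemma Zst_smul (c : ℚ) (v : ℚ × N × ℚ) :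
    Zst B H β t (c • v) = c * Zst B H β t v := by
  simp only [Zst, mpair, Prod.smul_fst, Prod.smul_snd, map_smul, smul_eq_mul]
  push_cast
  ring

variable {B}

lemma Zst_mexp (hB : ∀ a b : N, B a b = B b a) (γ : N) :
    Zst B H β t (mexp B γ)
      = (((B (t • H) (t • H) - B (γ - β) (γ - β)) / 2 : ℚ) : ℂ)
        + ((B (t • H) (γ - β) : ℚ) : ℂ) * Complex.I := by
  have hβγ := hB β γ
  simp only [Zst, mpair, mexp, mrho, map_sub, LinearMap.sub_apply, map_zero,
    LinearMap.zero_apply, hβγ]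
  push_cast
  ring

lemma Zst_eq_rInv_mul_Zst_mexp (hB : ∀ a b : N, B a b = B b a) (γ : N) (v : ℚ × N × ℚ) :
    Zst B H β t v
      = rInv B v * Zst B H β t (mexp B γ)
        + ((-B (v.2.1 - rInv B v • γ) (γ - β) - aInv B γ v : ℚ) : ℂ)
        + ((B (t • H) (v.2.1 - rInv B v • γ) : ℚ) : ℂ) * Complex.I := by
  have hβv := hB β v.2.1
  have hγβ := hB γ β
  simp only [Zst, mpair, mexp, mrho, rInv, aInv, map_sub, map_smul, map_zero, smul_eq_mul,
    LinearMap.sub_apply, LinearMap.smul_apply, LinearMap.zero_apply, hβv, hγβ]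
  push_cast
  ring

lemma Sigma2_smul_mexp (hB : ∀ a b : N, B a b = B b a) (γ : N) (r₁ : ℚ) (v : ℚ × N × ℚ) :
    Sigma2 B H β t v (r₁ • mexp B γ)
      = ((r₁ * ((-B (v.2.1 - rInv B v • γ) (γ - β) - aInv B γ v) * B (t • H) (γ - β)
          - B (t • H) (v.2.1 - rInv B v • γ)
            * ((B (t • H) (t • H) - B (γ - β) (γ - β)) / 2)) : ℚ) : ℝ) := by
  rw [Sigma2, Zst_smul, Zst_eq_rInv_mul_Zst_mexp H β t hB γ v, Zst_mexp H β t hB γ]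
  simp only [Complex.add_re, Complex.add_im, Complex.mul_re, Complex.mul_im, Complex.ratCast_re,
    Complex.ratCast_im, Complex.I_re, Complex.I_im]
  push_cast
  ring

end StabilityFunction

theorem sigma_L_formula_general (B : N →ₗ[ℚ] N →ₗ[ℚ] ℚ)
    (hB : ∀ a b : N, B a b = B b a) (H : N) (hH : 0 < B H H)
    (β ν : N) (hν : B ν H = 0) (t : ℚ) (ht : 0 < t)
    (lam r₁ : ℚ)
    (γ : N) (hγ : γ = β + lam • H + ν) (v : ℚ × N × ℚ) :
    Sigma2 B H β t v (r₁ • mexp B γ) / ((B H (t • H) : ℚ) : ℝ)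
        = ((-r₁ * B (v.2.1 - rInv B v • γ) (Ldiv B H ν t lam)
            - r₁ * lam * aInv B γ v : ℚ) : ℝ) ∧
      v.2.1 - rInv B v • γ = dInv B H γ v • H + DInv B H γ v := by
  refine ⟨?_, by rw [DInv]; abel⟩
  have hγβ : γ - β = lam • H + ν := by rw [hγ]; abel
  rw [Sigma2_smul_mexp H β t hB, ← Rat.cast_div, hγβ]
  congr 1
  set c := v.2.1 - rInv B v • γ
  have hHc := hB H c
  have hHν : B H ν = 0 := hB H ν ▸ hν
  simp only [Ldiv, map_add, map_smul, LinearMap.add_apply, LinearMap.smul_apply, smul_eq_mul,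
    hν, hHν, hHc]
  have ht₀ : t ≠ 0 := ht.ne'
  have hH₀ : B H H ≠ 0 := hH.ne'
  field_simp
  ring

/-- `Σ_{(β,ω)}(v, r₁e^γ)/(H,ω) = −r₁(c₁(v) − (rk v)γ, L) − r₁λ a_γ(v)`,
together with `c₁(v) − (rk v)γ = d_γ(v)H + D_γ(v)`. -/
theorem sigma_L_formula (B : N →ₗ[ℚ] N →ₗ[ℚ] ℚ)
    (hB : ∀ a b : N, B a b = B b a) (H : N) (hH : 0 < B H H)
    (β ν : N) (hν : B ν H = 0) (t : ℚ) (ht : 0 < t)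
    (lam r₁ : ℚ) (hr₁ : r₁ ≠ 0)
    (γ : N) (hγ : γ = β + lam • H + ν) (v : ℚ × N × ℚ) :
    Sigma2 B H β t v (r₁ • mexp B γ) / ((B H (t • H) : ℚ) : ℝ)
        = ((-r₁ * B (v.2.1 - rInv B v • γ) (Ldiv B H ν t lam)
            - r₁ * lam * aInv B γ v : ℚ) : ℝ) ∧
      v.2.1 - rInv B v • γ = dInv B H γ v • H + DInv B H γ v :=
  sigma_L_formula_general B hB H hH β ν hν t ht lam r₁ γ hγ v
end

section
/- Under the hypotheses of the previous statement (Z-values linearly dependent, ⟨vᵢ²⟩ ≥ 0), the identity ⟨v₁,v₂⟩·d₁d₂ = −½((d₁D₂ − d₂D₁)²) + d₂²⟨v₁²⟩/2 + d₁²⟨v₂²⟩/2 + (d₁r₂ − d₂r₁)²(ω²)/2 holds, and hence ⟨v₁,v₂⟩·d₁d₂ ≥ 0, with equality only if d₁v₂ = d₂v₁. -/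
variable {N : Type*} [AddCommGroup N] [Module ℚ N]

/-!
Write `v` through its invariants `r, d, D, a` at `β`: the Mukai pairing becomes
`⟨v,w⟩ = d_v d_w (H,H) + (D_v,D_w) − r_v a_w − r_w a_v` and
`Z(v) = (−a + r (ω²)/2) + i t (H,H) d`. Linear dependence of `Z(v₁), Z(v₂)` over `ℝ` is the
vanishing of the determinant `d₁a₂ − d₂a₁ = (d₁r₂ − d₂r₁)(ω²)/2`, and substituting this into
`⟨v₁,v₂⟩d₁d₂` gives the identity by pure algebra. Each of its four terms is nonnegative, the
first because `d₁D₂ − d₂D₁ ⊥ H`. If the sum vanishes, so does every term, forcing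
`d₁D₂ = d₂D₁` and `d₁r₂ = d₂r₁`, hence `d₁a₂ = d₂a₁`; since the invariants determine `v`
linearly, `d₁v₂ = d₂v₁`.
-/

section Invariants

variable (B : N →ₗ[ℚ] N →ₗ[ℚ] ℚ) (H β : N)

lemma rInv_eq (v : ℚ × N × ℚ) : rInv B v = v.1 := by
  simp [rInv, mpair, mrho]

lemma snd_snd_eq_aInv (v : ℚ × N × ℚ) :
    v.2.2 = aInv B β v - rInv B v * B β β / 2 + B v.2.1 β := by
  simp only [aInv, mpair, mexp, rInv_eq]
  ring

lemma snd_fst_eq_DInv (v : ℚ × N × ℚ) :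
    v.2.1 = DInv B H β v + rInv B v • β + dInv B H β v • H := by
  simp only [DInv]
  abel

lemma dInv_mul_eq (hH : B H H ≠ 0) (v : ℚ × N × ℚ) :
    dInv B H β v * B H H = B v.2.1 H - v.1 * B H β := by
  rw [dInv, div_mul_cancel₀ _ hH]
  simp [mpair]

variable {B H}

lemma DInv_orth (hB : ∀ a b : N, B a b = B b a) (hH : B H H ≠ 0) (v : ℚ × N × ℚ) :
    B (DInv B H β v) H = 0 := by
  simp only [DInv, map_sub, map_smul, LinearMap.sub_apply, LinearMap.smul_apply, smul_eq_mul]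
  rw [rInv_eq]
  linear_combination -dInv_mul_eq B H β hH v - v.1 * hB β H

lemma mpair_eq_dInv_DInv_aInv (hB : ∀ a b : N, B a b = B b a) (hH : B H H ≠ 0)
    (v w : ℚ × N × ℚ) :
    mpair B v w = dInv B H β v * dInv B H β w * B H H + B (DInv B H β v) (DInv B H β w)
      - rInv B v * aInv B β w - rInv B w * aInv B β v := by
  simp only [DInv, mpair, aInv, mexp, rInv_eq, map_sub, map_smul, LinearMap.sub_apply,
    LinearMap.smul_apply, smul_eq_mul]
  linear_combination -dInv B H β w * dInv_mul_eq B H β hH v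
    - dInv B H β v * dInv_mul_eq B H β hH w - v.1 * dInv B H β w * hB β H
    + dInv B H β v * hB H w.2.1 + v.1 * hB β w.2.1

lemma smul_eq_smul_of_invariants {c₁ c₂ : ℚ} {v₁ v₂ : ℚ × N × ℚ}
    (hr : c₁ * rInv B v₂ = c₂ * rInv B v₁)
    (hD : c₁ • DInv B H β v₂ = c₂ • DInv B H β v₁)
    (hd : c₁ * dInv B H β v₂ = c₂ * dInv B H β v₁)
    (ha : c₁ * aInv B β v₂ = c₂ * aInv B β v₁) :
    c₁ • v₂ = c₂ • v₁ := by
  have hN : c₁ • v₂.2.1 = c₂ • v₁.2.1 := by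
    rw [snd_fst_eq_DInv B H β v₂, snd_fst_eq_DInv B H β v₁]
    simp only [smul_add, smul_smul, hD, hr, hd]
  have hNβ : c₁ * B v₂.2.1 β = c₂ * B v₁.2.1 β := by
    simpa only [map_smul, LinearMap.smul_apply, smul_eq_mul] using congrArg (B · β) hN
  refine Prod.ext ?_ (Prod.ext hN ?_)
  · simpa only [Prod.smul_fst, smul_eq_mul, rInv_eq] using hr
  · rw [Prod.smul_snd, Prod.smul_snd, Prod.smul_snd, Prod.smul_snd, smul_eq_mul, smul_eq_mul,
      snd_snd_eq_aInv B β v₂, snd_snd_eq_aInv B β v₁]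
    linear_combination ha - B β β / 2 * hr + hNβ

end Invariants

lemma Zst_eq {B : N →ₗ[ℚ] N →ₗ[ℚ] ℚ} {H : N} (β : N) (t : ℚ)
    (hB : ∀ a b : N, B a b = B b a) (hH : B H H ≠ 0) (v : ℚ × N × ℚ) :
    Zst B H β t v = ((-aInv B β v + rInv B v * B (t • H) (t • H) / 2 : ℚ) : ℂ)
      + ((t * B H H * dInv B H β v : ℚ) : ℂ) * Complex.I := by
  have hexp : mpair B (mexp B β) v = -aInv B β v := by
    simp only [mpair, mexp, aInv]
    linear_combination hB β v.2.1
  have hω : mpair B (0, t • H, B (t • H) β) v = t * B H H * dInv B H β v := by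
    simp only [mpair, map_smul, LinearMap.smul_apply, smul_eq_mul]
    linear_combination t * hB H v.2.1 - t * dInv_mul_eq B H β hH v
  have hrho : mpair B mrho v = -rInv B v := by simp [mpair, mrho, rInv_eq]
  rw [Zst, hexp, hω, hrho]
  push_cast
  ring

lemma Complex.re_mul_im_eq_of_not_linearIndependent {z w : ℂ}
    (h : ¬ LinearIndependent ℝ ![z, w]) : z.re * w.im = w.re * z.im := by
  rw [linearIndependent_fin2] at h
  push Not at h
  simp only [Matrix.cons_val_one, Matrix.cons_val_zero] at h
  by_cases hw : w = 0
  · simp [hw]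
  · obtain ⟨c, rfl⟩ := h hw
    simp only [Complex.real_smul, Complex.re_ofReal_mul, Complex.im_ofReal_mul]
    ring

lemma dInv_mul_aInv_sub_eq_of_not_linearIndependent {B : N →ₗ[ℚ] N →ₗ[ℚ] ℚ}
    (hB : ∀ a b : N, B a b = B b a) {H : N} (hH : B H H ≠ 0) {β : N} {t : ℚ} (ht : t ≠ 0)
    {v₁ v₂ : ℚ × N × ℚ} (hdep : ¬ LinearIndependent ℝ ![Zst B H β t v₁, Zst B H β t v₂]) :
    dInv B H β v₁ * aInv B β v₂ - dInv B H β v₂ * aInv B β v₁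
      = (dInv B H β v₁ * rInv B v₂ - dInv B H β v₂ * rInv B v₁) * B (t • H) (t • H) / 2 := by
  have hdet := Complex.re_mul_im_eq_of_not_linearIndependent hdep
  simp only [Zst_eq β t hB hH, Complex.add_re, Complex.add_im, Complex.mul_re, Complex.mul_im,
    Complex.ratCast_re, Complex.ratCast_im, Complex.I_re, Complex.I_im, mul_zero, mul_one,
    sub_zero, add_zero, zero_add] at hdet
  have hdetℚ : (-aInv B β v₁ + rInv B v₁ * B (t • H) (t • H) / 2) * (t * B H H * dInv B H β v₂)
      = (-aInv B β v₂ + rInv B v₂ * B (t • H) (t • H) / 2) * (t * B H H * dInv B H β v₁) := by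
    exact_mod_cast hdet
  exact mul_left_cancel₀ (mul_ne_zero ht hH) (by linear_combination hdetℚ)

lemma mpair_mul_dInv_mul_dInv {B : N →ₗ[ℚ] N →ₗ[ℚ] ℚ} (hB : ∀ a b : N, B a b = B b a) {H : N}
    (hH : B H H ≠ 0) {β : N} {q : ℚ} {v₁ v₂ : ℚ × N × ℚ}
    (hdet : dInv B H β v₁ * aInv B β v₂ - dInv B H β v₂ * aInv B β v₁
      = (dInv B H β v₁ * rInv B v₂ - dInv B H β v₂ * rInv B v₁) * q / 2) :
    mpair B v₁ v₂ * (dInv B H β v₁ * dInv B H β v₂)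
      = -(B (dInv B H β v₁ • DInv B H β v₂ - dInv B H β v₂ • DInv B H β v₁)
            (dInv B H β v₁ • DInv B H β v₂ - dInv B H β v₂ • DInv B H β v₁)) / 2
        + dInv B H β v₂ ^ 2 * mpair B v₁ v₁ / 2
        + dInv B H β v₁ ^ 2 * mpair B v₂ v₂ / 2
        + (dInv B H β v₁ * rInv B v₂ - dInv B H β v₂ * rInv B v₁) ^ 2 * q / 2 := by
  rw [mpair_eq_dInv_DInv_aInv β hB hH v₁ v₂, mpair_eq_dInv_DInv_aInv β hB hH v₁ v₁,
    mpair_eq_dInv_DInv_aInv β hB hH v₂ v₂]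
  simp only [map_sub, map_smul, LinearMap.sub_apply, LinearMap.smul_apply, smul_eq_mul]
  linear_combination (dInv B H β v₁ * rInv B v₂ - dInv B H β v₂ * rInv B v₁) * hdet
    - dInv B H β v₁ * dInv B H β v₂ / 2 * hB (DInv B H β v₂) (DInv B H β v₁)

theorem positivity_identity_general (B : N →ₗ[ℚ] N →ₗ[ℚ] ℚ)
    (hB : ∀ a b : N, B a b = B b a) (H : N) (hH : 0 < B H H)
    (hneg : ∀ x : N, B x H = 0 → x ≠ 0 → B x x < 0)
    (β : N) (t : ℚ) (ht : 0 < t)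
    (v₁ v₂ : ℚ × N × ℚ)
    (hsq1 : 0 ≤ mpair B v₁ v₁) (hsq2 : 0 ≤ mpair B v₂ v₂)
    (hdep : ¬ LinearIndependent ℝ ![Zst B H β t v₁, Zst B H β t v₂]) :
    mpair B v₁ v₂ * (dInv B H β v₁ * dInv B H β v₂)
        = -(B (dInv B H β v₁ • DInv B H β v₂ - dInv B H β v₂ • DInv B H β v₁)
              (dInv B H β v₁ • DInv B H β v₂ - dInv B H β v₂ • DInv B H β v₁)) / 2
          + dInv B H β v₂ ^ 2 * mpair B v₁ v₁ / 2
          + dInv B H β v₁ ^ 2 * mpair B v₂ v₂ / 2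
          + (dInv B H β v₁ * rInv B v₂ - dInv B H β v₂ * rInv B v₁) ^ 2
              * B (t • H) (t • H) / 2 ∧
      0 ≤ mpair B v₁ v₂ * (dInv B H β v₁ * dInv B H β v₂) ∧
      (mpair B v₁ v₂ * (dInv B H β v₁ * dInv B H β v₂) = 0 →
        dInv B H β v₁ • v₂ = dInv B H β v₂ • v₁) := by
  have hdet := dInv_mul_aInv_sub_eq_of_not_linearIndependent hB hH.ne' ht.ne' hdep
  have hid := mpair_mul_dInv_mul_dInv hB hH.ne' hdet
  set d₁ := dInv B H β v₁
  set d₂ := dInv B H β v₂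
  set x := d₁ • DInv B H β v₂ - d₂ • DInv B H β v₁
  set δ := d₁ * rInv B v₂ - d₂ * rInv B v₁
  have hxH : B x H = 0 := by simp [x, DInv_orth β hB hH.ne']
  have hxx : B x x ≤ 0 := by
    rcases eq_or_ne x 0 with hx | hx
    · simp [hx]
    · exact (hneg x hxH hx).le
  have hω : 0 < B (t • H) (t • H) := by
    simp only [map_smul, LinearMap.smul_apply, smul_eq_mul]
    positivity
  have h₁ : 0 ≤ d₂ ^ 2 * mpair B v₁ v₁ := by positivity
  have h₂ : 0 ≤ d₁ ^ 2 * mpair B v₂ v₂ := by positivity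
  have h₃ : 0 ≤ δ ^ 2 * B (t • H) (t • H) := by positivity
  refine ⟨hid, by linarith, fun h0 ↦ ?_⟩
  have hx0 : x = 0 := by
    by_contra hx
    linarith [hneg x hxH hx]
  have hδ : δ = 0 := by
    have : δ ^ 2 * B (t • H) (t • H) = 0 := by linarith
    simpa using (mul_eq_zero.mp this).resolve_right hω.ne'
  exact smul_eq_smul_of_invariants β (by linear_combination hδ) (sub_eq_zero.mp hx0)
    (mul_comm d₁ d₂) (by linear_combination hdet + B (t • H) (t • H) / 2 * hδ)

/-- Under linear dependence of the `Z`-values and `⟨vᵢ²⟩ ≥ 0`: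
`⟨v₁,v₂⟩d₁d₂ = −½((d₁D₂−d₂D₁)²) + d₂²⟨v₁²⟩/2 + d₁²⟨v₂²⟩/2
 + (d₁r₂−d₂r₁)²(ω²)/2 ≥ 0`, with equality only if `d₁v₂ = d₂v₁`. -/
theorem positivity_identity (B : N →ₗ[ℚ] N →ₗ[ℚ] ℚ)
    (hB : ∀ a b : N, B a b = B b a) (H : N) (hH : 0 < B H H)
    (hneg : ∀ x : N, B x H = 0 → x ≠ 0 → B x x < 0)
    (β : N) (t : ℚ) (ht : 0 < t)
    (v₁ v₂ : ℚ × N × ℚ) (h1 : v₁ ≠ 0) (h2 : v₂ ≠ 0)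
    (hsq1 : 0 ≤ mpair B v₁ v₁) (hsq2 : 0 ≤ mpair B v₂ v₂)
    (hdep : ¬ LinearIndependent ℝ ![Zst B H β t v₁, Zst B H β t v₂]) :
    mpair B v₁ v₂ * (dInv B H β v₁ * dInv B H β v₂)
        = -(B (dInv B H β v₁ • DInv B H β v₂ - dInv B H β v₂ • DInv B H β v₁)
              (dInv B H β v₁ • DInv B H β v₂ - dInv B H β v₂ • DInv B H β v₁)) / 2
          + dInv B H β v₂ ^ 2 * mpair B v₁ v₁ / 2
          + dInv B H β v₁ ^ 2 * mpair B v₂ v₂ / 2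
          + (dInv B H β v₁ * rInv B v₂ - dInv B H β v₂ * rInv B v₁) ^ 2
              * B (t • H) (t • H) / 2 ∧
      0 ≤ mpair B v₁ v₂ * (dInv B H β v₁ * dInv B H β v₂) ∧
      (mpair B v₁ v₂ * (dInv B H β v₁ * dInv B H β v₂) = 0 →
        dInv B H β v₁ • v₂ = dInv B H β v₂ • v₁) :=
  positivity_identity_general B hB H hH hneg β t ht v₁ v₂ hsq1 hsq2 hdep
end

section
/- Let K3 surface X have Pic(X) = ℤH, so the algebraic Mukai lattice is Λ = ℤ ⊕ ℤH ⊕ ℤϱ with ⟨(x₀,x₁H,x₂), (y₀,y₁H,y₂)⟩ = x₁y₁(H²) − x₀y₂ − x₂y₀. Fix a primitive isotropic w₁ = r₁e^γ (γ ∈ ℚH) and a pair (β,ω). Then there is at most one Mukai vector v with ⟨v²⟩ = −2, d_β(v) > 0, and phase condition Σ_{(β,ω)}(v, w₁) = 0 together with −r₁(c₁(v) − rk(v)γ, L) + λ⟨v, w₁⟩ = 0 (the linear phase-equality constraint); i.e. the solution of this pair of linear conditions with ⟨v²⟩ = −2 and d_β(v) > 0 is unique if it exists. -/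
/-- The rational Mukai pairing of a K3 surface with `Pic = ℤH`,
in coordinates `(rank, H-coefficient of c₁, ϱ-coefficient)`, with `h = (H²)`. -/
def kpair (h : ℚ) (x y : ℚ × ℚ × ℚ) : ℚ :=
  x.2.1 * y.2.1 * h - x.1 * y.2.2 - x.2.2 * y.1

/-- `e^{cH}`. -/
def kexp (h c : ℚ) : ℚ × ℚ × ℚ := (1, c, c ^ 2 * h / 2)

/-- `d_β` for `β = bH`. -/
def kd (h b : ℚ) (v : ℚ × ℚ × ℚ) : ℚ := (v.2.1 * h - v.1 * (h * b)) / h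

/-- The stability function `Z_{(bH, tH)}`. -/
noncomputable def kZ (h b t : ℚ) (v : ℚ × ℚ × ℚ) : ℂ :=
  ((kpair h (kexp h b) v : ℚ) : ℂ)
    + ((kpair h (0, t, t * h * b) v : ℚ) : ℂ) * Complex.I
    - ((t ^ 2 * h / 2 : ℚ) : ℂ) * ((kpair h (0, 0, 1) v : ℚ) : ℂ)

/-- `Σ_{(β,ω)}`. -/
noncomputable def kSig (h b t : ℚ) (v w : ℚ × ℚ × ℚ) : ℝ :=
  (kZ h b t v).re * (kZ h b t w).im - (kZ h b t v).im * (kZ h b t w).re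

/-- The inclusion of the integral Mukai lattice. -/
def intCast3 (v : ℤ × ℤ × ℤ) : ℚ × ℚ × ℚ := ((v.1 : ℚ), (v.2.1 : ℚ), (v.2.2 : ℚ))

/-- The conditions on `v`: `⟨v²⟩ = −2`, `d_β(v) > 0`, `Σ_{(β,ω)}(v, w₁) = 0`,
and the linear phase-equality constraint
`−r₁(c₁(v) − rk(v)γ, L) + λ⟨v, w₁⟩ = 0`, where `γ = cH`, `β = bH`, `λ = c − b`,
`L = ((ω²) + λ²(H²))/(2(H²))·H` and `w₁ = r₁e^γ`. -/
def KCond (h b c t r₁ : ℚ) (v : ℤ × ℤ × ℤ) : Prop :=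
  kpair h (intCast3 v) (intCast3 v) = -2 ∧
  0 < kd h b (intCast3 v) ∧
  kSig h b t (intCast3 v) (r₁ • kexp h c) = 0 ∧
  -r₁ * (((intCast3 v).2.1 - (intCast3 v).1 * c)
      * ((t ^ 2 * h + (c - b) ^ 2 * h) / (2 * h)) * h)
    + (c - b) * kpair h (intCast3 v) (r₁ • kexp h c) = 0

/-!
Write `e = e^γ`; it is isotropic. On `e^⊥` the linear phase-equality constraint cuts out exactly
`ℚe`, so `⟨v, e⟩ ≠ 0` (otherwise `v ∈ ℚe` would be isotropic) and `x = v' − αv` with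
`α = ⟨v', e⟩ / ⟨v, e⟩` lies in `ℚe`. Then `⟨x, x⟩ = 0` reads `α² + ⟨v, v'⟩α + 1 = 0`, a monic
integral equation with constant term `1`, so `α = ±1`; pairing `x` with `v` then gives `x = 0`.
Hence `v' = ±v`, and `d_β > 0` fixes the sign.
-/

theorem Rat.eq_one_or_eq_neg_one_of_sq_add_mul_add_one_eq_zero {α : ℚ} {P : ℤ}
    (hα : α ^ 2 + P * α + 1 = 0) : α = 1 ∨ α = -1 := by
  have hnum : α.num ^ 2 = -α.den * (P * α.num + α.den) := by
    have : (α.num : ℚ) ^ 2 = -α.den * (P * α.num + α.den) := by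
      linear_combination (α.den : ℚ) ^ 2 * hα
        - (α.num + α * α.den + α.den * P) * Rat.mul_den_eq_num α
    exact_mod_cast this
  have hden : α.den = 1 := by
    have : IsUnit (α.den : ℤ) :=
      (α.isCoprime_num_den.pow_left (m := 2)).isUnit_of_dvd'
        ⟨-(P * α.num + α.den), by rw [hnum]; ring⟩ dvd_rfl
    exact_mod_cast Int.isUnit_iff.mp this |>.resolve_right (by omega)
  obtain ⟨m, rfl⟩ : ∃ m : ℤ, (m : ℚ) = α := ⟨α.num, (Rat.den_eq_one_iff α).mp hden⟩
  have hm : m * (-m - P) = 1 := by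
    have : (m : ℚ) * (-m - P) = 1 := by linear_combination -hα
    exact_mod_cast this
  rcases Int.eq_one_or_neg_one_of_mul_eq_one hm with rfl | rfl <;> simp

theorem LinearMap.BilinForm.IsSymm.eq_or_eq_neg_of_apply_self_eq_neg_two {V : Type*}
    [AddCommGroup V] [Module ℚ V] {B : LinearMap.BilinForm ℚ V} (hB : B.IsSymm)
    {K : Submodule ℚ V} {e : V} (he : B e e = 0) (hK : ∀ x ∈ K, B x e = 0 → x ∈ ℚ ∙ e)
    {v v' : V} (hv : v ∈ K) (hv' : v' ∈ K) (hvv : B v v = -2) (hv'v' : B v' v' = -2)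
    {P : ℤ} (hP : B v v' = P) :
    v' = v ∨ v' = -v := by
  have hD : B v e ≠ 0 := by
    intro hD
    obtain ⟨s, rfl⟩ := Submodule.mem_span_singleton.mp (hK v hv hD)
    simp [he] at hvv
  set α := B v' e / B v e
  obtain ⟨s, hs⟩ : ∃ s : ℚ, s • e = v' - α • v :=
    Submodule.mem_span_singleton.mp <| hK _ (K.sub_mem hv' (K.smul_mem α hv)) (by
      simp [α, hD])
  have hα : α ^ 2 + P * α + 1 = 0 := by
    have := congrArg (fun x => B x x) hs
    simp only [map_sub, map_smul, LinearMap.sub_apply, LinearMap.smul_apply, smul_eq_mul, he,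
      hvv, hv'v', ← hB.eq v v', hP] at this
    linear_combination this / 2
  have hα' := Rat.eq_one_or_eq_neg_one_of_sq_add_mul_add_one_eq_zero hα
  have hs0 : s = 0 := by
    have := congrArg (fun x => B x v) hs
    simp only [map_sub, map_smul, LinearMap.sub_apply, LinearMap.smul_apply, smul_eq_mul,
      ← hB.eq v e, ← hB.eq v v', hP, hvv, mul_neg, sub_neg_eq_add] at this
    have hP2 : (P : ℚ) + α * 2 = 0 := by
      rcases hα' with h | h <;> rw [h] at hα ⊢ <;> linarith
    exact (mul_eq_zero.mp (this.trans hP2)).resolve_right hD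
  subst hs0
  rcases hα' with h1 | h1
  · left; simpa [h1, sub_eq_zero, eq_comm] using hs
  · right; simpa [h1, eq_neg_iff_add_eq_zero, eq_comm] using hs

def kpairForm (h : ℚ) : LinearMap.BilinForm ℚ (ℚ × ℚ × ℚ) :=
  LinearMap.mk₂ ℚ (kpair h)
    (fun _ _ _ => by simp only [kpair, Prod.fst_add, Prod.snd_add]; ring)
    (fun _ _ _ => by simp only [kpair, Prod.smul_fst, Prod.smul_snd, smul_eq_mul]; ring)
    (fun _ _ _ => by simp only [kpair, Prod.fst_add, Prod.snd_add]; ring)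
    (fun _ _ _ => by simp only [kpair, Prod.smul_fst, Prod.smul_snd, smul_eq_mul]; ring)

theorem kpairForm_isSymm (h : ℚ) : (kpairForm h).IsSymm :=
  ⟨fun _ _ => by simp only [kpairForm, LinearMap.mk₂_apply, kpair]; ring⟩

theorem kpair_kexp_self (h c : ℚ) : kpair h (kexp h c) (kexp h c) = 0 := by
  simp only [kpair, kexp]; ring

/-- The left-hand side of the phase-equality constraint in `KCond`, so that this constraint is
definitionally `intCast3 v ∈ LinearMap.ker (kphase h b c t r₁)`. -/
def kphase (h b c t r₁ : ℚ) : (ℚ × ℚ × ℚ) →ₗ[ℚ] ℚ where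
  toFun x := -r₁ * ((x.2.1 - x.1 * c) * ((t ^ 2 * h + (c - b) ^ 2 * h) / (2 * h)) * h)
    + (c - b) * kpair h x (r₁ • kexp h c)
  map_add' _ _ := by simp only [kpair, Prod.fst_add, Prod.snd_add]; ring
  map_smul' _ _ := by
    simp only [kpair, Prod.smul_fst, Prod.smul_snd, smul_eq_mul, RingHom.id_apply]; ring

theorem mem_span_kexp_of_mem_ker_kphase {h b c t r₁ : ℚ} (hh : h ≠ 0) (ht : t ≠ 0)
    (hr₁ : r₁ ≠ 0) {x : ℚ × ℚ × ℚ} (hx : x ∈ LinearMap.ker (kphase h b c t r₁))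
    (hxe : kpairForm h x (kexp h c) = 0) : x ∈ ℚ ∙ kexp h c := by
  have hxe' : kpairForm h x (r₁ • kexp h c) = 0 := by rw [map_smul, hxe, smul_zero]
  have hL : (t ^ 2 * h + (c - b) ^ 2 * h) / (2 * h) * h = (t ^ 2 + (c - b) ^ 2) * h / 2 := by
    field_simp
  have hL0 : (t ^ 2 + (c - b) ^ 2) * h / 2 ≠ 0 := by positivity
  change -r₁ * ((x.2.1 - x.1 * c) * _ * h) + (c - b) * kpairForm h x (r₁ • kexp h c) = 0 at hx
  rw [hxe', mul_zero, add_zero, mul_assoc, hL] at hx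
  have h₁ : x.2.1 = x.1 * c := by simpa [hr₁, hL0, sub_eq_zero] using hx
  simp only [kpairForm, LinearMap.mk₂_apply, kpair, kexp] at hxe
  refine Submodule.mem_span_singleton.mpr ⟨x.1, ?_⟩
  ext <;> simp only [kexp, Prod.smul_mk, smul_eq_mul, mul_one]
  · exact h₁.symm
  · linear_combination hxe - c * h * h₁

theorem kd_neg (h b : ℚ) (x : ℚ × ℚ × ℚ) : kd h b (-x) = -kd h b x := by
  simp only [kd, Prod.fst_neg, Prod.snd_neg]; ring

theorem intCast3_injective : Function.Injective intCast3 := by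
  rintro ⟨a₁, a₂, a₃⟩ ⟨b₁, b₂, b₃⟩ hab
  simp_all [intCast3]

theorem minus_two_vector_unique_general
    (h : ℤ) (hh : 0 < h)
    (b c t r₁ : ℚ) (ht : 0 < t) (hr₁ : r₁ ≠ 0)
    (v v' : ℤ × ℤ × ℤ)
    (hv : KCond (h : ℚ) b c t r₁ v) (hv' : KCond (h : ℚ) b c t r₁ v') :
    v = v' := by
  obtain ⟨hvv, hdv, -, hphase⟩ := hv
  obtain ⟨hv'v', hdv', -, hphase'⟩ := hv'
  have hh' : (h : ℚ) ≠ 0 := by positivity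
  rcases (kpairForm_isSymm h).eq_or_eq_neg_of_apply_self_eq_neg_two (kpair_kexp_self h c)
      (fun _ => mem_span_kexp_of_mem_ker_kphase hh' ht.ne' hr₁) hphase hphase' hvv hv'v'
      (P := v.2.1 * v'.2.1 * h - v.1 * v'.2.2 - v.2.2 * v'.1)
      (by simp [kpairForm, kpair, intCast3]) with hsame | hopp
  · exact (intCast3_injective hsame).symm
  · rw [hopp, kd_neg] at hdv'
    linarith

/-- On a K3 surface with `Pic = ℤH`, for a fixed primitive isotropic `w₁ = r₁e^γ`,
there is at most one Mukai vector `v` with `⟨v²⟩ = −2`, `d_β(v) > 0` and the linear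
phase-equality conditions. -/
theorem minus_two_vector_unique
    (h : ℤ) (hh : 0 < h) (heven : Even h)
    (b c t r₁ : ℚ) (ht : 0 < t) (hr₁ : r₁ ≠ 0)
    (W : ℤ × ℤ × ℤ)
    (hW : intCast3 W = r₁ • kexp (h : ℚ) c)
    (hWprim : ∀ d : ℤ, d ∣ W.1 → d ∣ W.2.1 → d ∣ W.2.2 → IsUnit d)
    (v v' : ℤ × ℤ × ℤ)
    (hv : KCond (h : ℚ) b c t r₁ v) (hv' : KCond (h : ℚ) b c t r₁ v') :
    v = v' :=
  minus_two_vector_unique_general h hh b c t r₁ ht hr₁ v v' hv hv'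
end

section
/- Let v = Σᵢ₌₁ˢ nᵢvᵢ with s ≥ 3, where the vᵢ are distinct primitive Mukai vectors on an abelian surface with ⟨vᵢ²⟩ ≥ 0, nᵢ ≥ 1, all Z_{(β,ω)}(vᵢ) lying on the same ray as Z_{(β,ω)}(v) (equal phases), and all d_β(vᵢ) > 0. Then for every isotropic Mukai vector w with the same phase as v and d_β(w) > 0, one has ⟨v, w⟩ ≥ 2. -/
variable {N : Type*} [AddCommGroup N] [Module ℚ N]

/-!
The real and imaginary parts of `Z_{(β,ω)}` are two linear forms on the Mukai lattice, and by the
Hodge index theorem the Mukai pairing is negative definite on their common kernel. If `x` and `y`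
have equal phase and positive `d_β`, then `u = x - c y` with `c = d_β(x) / d_β(y) > 0` lies in that
kernel, so `0 ≥ ⟨u²⟩ = ⟨x²⟩ - 2c⟨x,y⟩ + c²⟨y²⟩`. Hence `⟨x,y⟩ ≥ 0` as soon as `⟨x²⟩, ⟨y²⟩ ≥ 0`, and
`⟨x,y⟩ = 0` forces `x = c y`. For `x = vᵢ`, `y = w` primitivity turns this into `vᵢ = w`, which
holds for at most one `i`; the remaining `s - 1 ≥ 2` integers `⟨vᵢ,w⟩` are at least `1`.
-/

open Finset

lemma apply_sub_smul_self {R M : Type*} [CommRing R] [AddCommGroup M] [Module R M]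
    {Q : M →ₗ[R] M →ₗ[R] R} (hQ : ∀ x y, Q x y = Q y x) (c : R) (x y : M) :
    Q (x - c • y) (x - c • y) = Q x x - 2 * c * Q x y + c ^ 2 * Q y y := by
  simp only [map_sub, map_smul, LinearMap.sub_apply, LinearMap.smul_apply, smul_eq_mul, hQ y x]
  ring

theorem apply_nonneg_and_eq_smul_of_same_phase {𝕜 V : Type*} [Field 𝕜] [LinearOrder 𝕜]
    [IsStrictOrderedRing 𝕜] [AddCommGroup V] [Module 𝕜 V] {Q : V →ₗ[𝕜] V →ₗ[𝕜] 𝕜}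
    (hQ : ∀ x y, Q x y = Q y x) {f g : V →ₗ[𝕜] 𝕜}
    (hker : ∀ u, f u = 0 → g u = 0 → u ≠ 0 → Q u u < 0) {x y : V}
    (hx : 0 ≤ Q x x) (hy : 0 ≤ Q y y) (hgx : 0 < g x) (hgy : 0 < g y)
    (hfg : f x * g y = f y * g x) :
    0 ≤ Q x y ∧ (Q x y = 0 → ∃ c : 𝕜, 0 < c ∧ x = c • y) := by
  set c := g x / g y
  have hc : 0 < c := div_pos hgx hgy
  have hgu : g (x - c • y) = 0 := by
    rw [map_sub, map_smul, smul_eq_mul, div_mul_cancel₀ _ hgy.ne', sub_self]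
  have hfu : f (x - c • y) = 0 := by
    rw [map_sub, map_smul, smul_eq_mul, sub_eq_zero, div_mul_eq_mul_div, eq_div_iff hgy.ne', hfg,
      mul_comm]
  have hexp := apply_sub_smul_self hQ c x y
  have hle : Q (x - c • y) (x - c • y) ≤ 0 := by
    by_cases hu : x - c • y = 0
    · simp [hu]
    · exact (hker _ hfu hgu hu).le
  refine ⟨by nlinarith [mul_nonneg (sq_nonneg c) hy], fun h0 => ⟨c, hc, ?_⟩⟩
  by_contra hne
  have := hker _ hfu hgu (sub_ne_zero.mpr hne)
  nlinarith [mul_nonneg (sq_nonneg c) hy]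

lemma card_sub_one_le_sum_mul {ι : Type*} [Fintype ι] {n m : ι → ℤ} (hn : ∀ i, 1 ≤ n i)
    (hm : ∀ i, 0 ≤ m i) (hzero : ∀ i j, m i = 0 → m j = 0 → i = j) :
    (Fintype.card ι : ℤ) - 1 ≤ ∑ i, n i * m i := by
  have hterm : ∀ i, 1 - (if m i = 0 then 1 else 0) ≤ n i * m i := by
    intro i
    split_ifs with h
    · simp [h]
    · nlinarith [hn i, lt_of_le_of_ne (hm i) (Ne.symm h)]
  have hzeros : #(univ.filter (m · = 0)) ≤ 1 :=
    card_le_one.mpr fun i hi j hj => hzero i j (mem_filter.mp hi).2 (mem_filter.mp hj).2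
  calc (Fintype.card ι : ℤ) - 1 ≤ ∑ i, (1 - if m i = 0 then 1 else 0) := by
        rw [sum_sub_distrib, sum_boole, sum_const, card_univ, nsmul_one]
        omega
    _ ≤ ∑ i, n i * m i := sum_le_sum fun i _ => hterm i

section Mukai

variable (B : N →ₗ[ℚ] N →ₗ[ℚ] ℚ) (H β : N) (t : ℚ)

def mpairBilin : (ℚ × N × ℚ) →ₗ[ℚ] (ℚ × N × ℚ) →ₗ[ℚ] ℚ :=
  LinearMap.mk₂ ℚ (mpair B)
    (fun _ _ _ => by simp only [mpair, Prod.fst_add, Prod.snd_add, map_add,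
      LinearMap.add_apply]; ring)
    (fun _ _ _ => by simp only [mpair, Prod.smul_fst, Prod.smul_snd, map_smul,
      LinearMap.smul_apply, smul_eq_mul]; ring)
    (fun _ _ _ => by simp only [mpair, Prod.fst_add, Prod.snd_add, map_add]; ring)
    (fun _ _ _ => by simp only [mpair, Prod.smul_fst, Prod.smul_snd, map_smul, smul_eq_mul]; ring)

@[simp]
lemma mpairBilin_apply (x y : ℚ × N × ℚ) : mpairBilin B x y = mpair B x y := rfl

variable {B} in
lemma mpair_comm (hB : ∀ a b : N, B a b = B b a) (x y : ℚ × N × ℚ) :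
    mpair B x y = mpair B y x := by
  simp only [mpair, hB x.2.1]
  ring

def Zre : (ℚ × N × ℚ) →ₗ[ℚ] ℚ :=
  mpairBilin B (mexp B β) - (B (t • H) (t • H) / 2) • mpairBilin B mrho

def Zim : (ℚ × N × ℚ) →ₗ[ℚ] ℚ :=
  mpairBilin B (0, t • H, B (t • H) β)

lemma Zst_eq_Zre_add_Zim_mul_I (v : ℚ × N × ℚ) :
    Zst B H β t v = (Zre B H β t v : ℂ) + (Zim B H β t v : ℂ) * Complex.I := by
  simp only [Zst, Zre, Zim, LinearMap.sub_apply, LinearMap.smul_apply, mpairBilin_apply,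
    smul_eq_mul]
  push_cast
  ring

variable {B H}

lemma Zim_eq_mul_dInv (hB : ∀ a b : N, B a b = B b a) (hH : B H H ≠ 0) (v : ℚ × N × ℚ) :
    Zim B H β t v = t * B H H * dInv B H β v := by
  simp only [Zim, dInv, mpairBilin_apply, mpair, map_smul, LinearMap.smul_apply, smul_eq_mul,
    hB H v.2.1]
  field_simp
  ring

lemma Complex.re_mul_im_eq_of_eq_ofReal_mul {z₁ z₂ z : ℂ} {c₁ c₂ : ℝ} (h₁ : z₁ = c₁ * z)
    (h₂ : z₂ = c₂ * z) : z₁.re * z₂.im = z₂.re * z₁.im := by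
  subst h₁ h₂
  simp only [Complex.mul_re, Complex.mul_im, Complex.ofReal_re, Complex.ofReal_im]
  ring

lemma Zre_mul_Zim_eq {x y V : ℚ × N × ℚ} {c₁ c₂ : ℝ}
    (hx : Zst B H β t x = c₁ * Zst B H β t V) (hy : Zst B H β t y = c₂ * Zst B H β t V) :
    Zre B H β t x * Zim B H β t y = Zre B H β t y * Zim B H β t x := by
  have h := Complex.re_mul_im_eq_of_eq_ofReal_mul hx hy
  simp only [Zst_eq_Zre_add_Zim_mul_I, Complex.add_re, Complex.add_im, Complex.mul_re,
    Complex.mul_im, Complex.I_re, Complex.I_im, Complex.ratCast_re, Complex.ratCast_im, mul_zero,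
    mul_one, sub_self, add_zero, zero_add] at h
  exact_mod_cast h

lemma mpair_self_of_Zre_eq_zero (hB : ∀ a b : N, B a b = B b a) {u : ℚ × N × ℚ}
    (hu : Zre B H β t u = 0) :
    mpair B u u = B (u.2.1 - u.1 • β) (u.2.1 - u.1 • β) - t ^ 2 * B H H * u.1 ^ 2 := by
  obtain ⟨r, c, a⟩ := u
  simp only [Zre, mexp, mrho, LinearMap.sub_apply, LinearMap.smul_apply, mpairBilin_apply,
    mpair, map_smul, map_zero, LinearMap.zero_apply, smul_eq_mul] at hu ⊢
  simp only [map_sub, map_smul, LinearMap.sub_apply, LinearMap.smul_apply, smul_eq_mul,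
    hB c β]
  linear_combination (2 * r) * hu

lemma apply_H_eq_zero_of_Zim_eq_zero (hB : ∀ a b : N, B a b = B b a) (ht : t ≠ 0)
    {u : ℚ × N × ℚ} (hu : Zim B H β t u = 0) : B (u.2.1 - u.1 • β) H = 0 := by
  simp only [Zim, mpairBilin_apply, mpair, map_smul, LinearMap.smul_apply, smul_eq_mul] at hu
  have h : t * (B H u.2.1 - B H β * u.1) = 0 := by linear_combination hu
  simp only [map_sub, map_smul, LinearMap.sub_apply, LinearMap.smul_apply, smul_eq_mul,
    hB u.2.1 H, hB β H]
  linear_combination (mul_eq_zero.mp h).resolve_left ht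

/-- The Hodge index theorem on the kernel of `Z_{(β,ω)}`. -/
lemma mpair_self_neg_of_Zst_eq_zero (hB : ∀ a b : N, B a b = B b a) (hH : 0 < B H H)
    (hneg : ∀ x : N, B x H = 0 → x ≠ 0 → B x x < 0) (ht : t ≠ 0) (u : ℚ × N × ℚ)
    (hre : Zre B H β t u = 0) (him : Zim B H β t u = 0) (hu : u ≠ 0) : mpair B u u < 0 := by
  rw [mpair_self_of_Zre_eq_zero β t hB hre]
  have hDH := apply_H_eq_zero_of_Zim_eq_zero β t hB ht him
  set D := u.2.1 - u.1 • β
  by_cases hD : D = 0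
  · have hr : u.1 ≠ 0 := by
      intro hr
      apply hu
      have hc : u.2.1 = 0 := by simpa [D, hr] using hD
      have ha : u.2.2 = 0 := by
        simpa [Zre, mexp, mrho, mpair, hr, hc] using hre
      exact Prod.ext hr (Prod.ext hc ha)
    rw [hD, map_zero]
    have : 0 < t ^ 2 * B H H * u.1 ^ 2 := by positivity
    linarith
  · have : 0 ≤ t ^ 2 * B H H * u.1 ^ 2 := by positivity
    linarith [hneg D hDH hD]

end Mukai

/-- If `v = ∑ nᵢvᵢ` with `s ≥ 3` distinct primitive Mukai vectors of equal phase,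
`⟨vᵢ²⟩ ≥ 0`, `nᵢ ≥ 1`, `d_β(vᵢ) > 0`, then every isotropic `w` of the same phase
with `d_β(w) > 0` satisfies `⟨v, w⟩ ≥ 2`. -/
theorem pairing_at_least_two (B : N →ₗ[ℚ] N →ₗ[ℚ] ℚ)
    (hB : ∀ a b : N, B a b = B b a) (H : N) (hH : 0 < B H H)
    (hneg : ∀ x : N, B x H = 0 → x ≠ 0 → B x x < 0)
    (β : N) (t : ℚ) (ht : 0 < t)
    (s : ℕ) (hs : 3 ≤ s) (v_ : Fin s → ℚ × N × ℚ) (n : Fin s → ℕ)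
    (hn : ∀ i, 1 ≤ n i) (hdist : Function.Injective v_)
    (hsq : ∀ i, 0 ≤ mpair B (v_ i) (v_ i))
    (hd : ∀ i, 0 < dInv B H β (v_ i))
    (hphase : ∀ i, ∃ c : ℝ, 0 < c ∧
        Zst B H β t (v_ i) = (c : ℂ) * Zst B H β t (∑ j, (n j : ℚ) • v_ j))
    (w : ℚ × N × ℚ) (hw0 : mpair B w w = 0)
    (hwphase : ∃ c : ℝ, 0 < c ∧
        Zst B H β t w = (c : ℂ) * Zst B H β t (∑ j, (n j : ℚ) • v_ j))
    (hwd : 0 < dInv B H β w)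
    (hint : ∀ i, ∃ m : ℤ, mpair B (v_ i) w = (m : ℚ))
    (hprim : ∀ i, ∀ q0 : ℚ, v_ i = q0 • w → q0 = 1 ∨ q0 = -1) :
    2 ≤ mpair B (∑ j, (n j : ℚ) • v_ j) w := by
  have hZim : ∀ x, 0 < dInv B H β x → 0 < Zim B H β t x := fun x hx => by
    rw [Zim_eq_mul_dInv β t hB hH.ne']; positivity
  have hpair : ∀ i, 0 ≤ mpair B (v_ i) w ∧ (mpair B (v_ i) w = 0 → v_ i = w) := by
    intro i
    obtain ⟨c₁, -, h₁⟩ := hphase i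
    obtain ⟨c₂, -, h₂⟩ := hwphase
    obtain ⟨hnonneg, heq⟩ := apply_nonneg_and_eq_smul_of_same_phase (Q := mpairBilin B) (mpair_comm hB)
      (mpair_self_neg_of_Zst_eq_zero β t hB hH hneg ht.ne') (hsq i) hw0.ge (hZim _ (hd i))
      (hZim _ hwd) (Zre_mul_Zim_eq β t h₁ h₂)
    refine ⟨hnonneg, fun h0 => ?_⟩
    obtain ⟨c, hc, hvw⟩ := heq h0
    obtain rfl | rfl := hprim i c hvw
    · simpa using hvw
    · norm_num at hc
  choose m hm using hint
  have hsum : mpair B (∑ j, (n j : ℚ) • v_ j) w = ((∑ j, (n j : ℤ) * m j : ℤ) : ℚ) := by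
    rw [← mpairBilin_apply, map_sum, LinearMap.sum_apply]
    push_cast
    simp [hm]
  have hbound := card_sub_one_le_sum_mul (n := fun j => (n j : ℤ)) (m := m)
    (fun i => by exact_mod_cast hn i) (fun i => by exact_mod_cast hm i ▸ (hpair i).1)
    (fun i j hi hj => hdist (((hpair i).2 (by simp [hm, hi])).trans
      ((hpair j).2 (by simp [hm, hj])).symm))
  rw [Fintype.card_fin] at hbound
  rw [hsum]
  exact_mod_cast (by omega : (2 : ℤ) ≤ ∑ j, (n j : ℤ) * m j)
end
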